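/- Lamport's bakery algorithm for two processes (Example 3) satisfies non-starvation for process 1 under fairness: for every fair event stream es and every position i, if the first component of the trace σ of es under step3 from initial state (T,T,0,0) at position i is W, then there exists j ≥ i such that the first component of σ j is U. -/

import Mathlib

inductive ProcState : Type where
  | T | W | U
deriving DecidableEq

inductive Event : Type where
  | request1 | request2 | take1 | take2 | release1 | release2
deriving DecidableEq

def trace {S : Type} (step : Event → S → S) (s0 : S) (es : ℕ → Event) : ℕ → S
  | 0 => s0
  | n + 1 => step (es n) (trace step s0 es n)

def Fair (es : ℕ → Event) : Prop := ∀ (e : Event) (n : ℕ), ∃ m, n ≤ m ∧ es m = e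

def step3 : Event → ProcState × ProcState × ℕ × ℕ → ProcState × ProcState × ℕ × ℕ
  | .request1, (s1, s2, t1, t2) =>
      if s1 = ProcState.T then (.W, s2, t2 + 1, t2) else (s1, s2, t1, t2)
  | .request2, (s1, s2, t1, t2) =>
      if s2 = ProcState.T then (s1, .W, t1, t1 + 1) else (s1, s2, t1, t2)
  | .take1, (s1, s2, t1, t2) =>
      if s1 = ProcState.W ∧ (s2 = ProcState.T ∨ t1 < t2) then (.U, s2, t1, t2)
      else (s1, s2, t1, t2)
  | .take2, (s1, s2, t1, t2) =>
      if s2 = ProcState.W ∧ (s1 = ProcState.T ∨ t2 < t1) then (s1, .U, t1, t2)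
      else (s1, s2, t1, t2)
  | .release1, (s1, s2, t1, t2) =>
      if s1 = ProcState.U then (.T, s2, 0, t2) else (s1, s2, t1, t2)
  | .release2, (s1, s2, t1, t2) =>
      if s2 = ProcState.U then (s1, .T, t1, 0) else (s1, s2, t1, t2)

/-!
Process 1 waiting can be in only three situations: it may take its critical section at once, process 2 is in
its critical section, or process 2 is also waiting with a smaller ticket. The invariant that the two tickets
differ whenever neither process is thinking rules out a tie. Each situation persists, or improves, until one
specific event of process 2 or of process 1 fires, which fairness guarantees; chaining the three steps gives
non-starvation.
-/

section LeadsTo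

variable {S : Type} (step : Event → S → S) (s0 : S) (es : ℕ → Event)

theorem trace_succ (n : ℕ) : trace step s0 es (n + 1) = step (es n) (trace step s0 es n) := rfl

theorem trace_invariant {I : S → Prop} (h0 : I s0) (hstep : ∀ e s, I s → I (step e s)) (n : ℕ) :
    I (trace step s0 es n) := by
  induction n with
  | zero => exact h0
  | succ n ih => exact hstep _ _ ih

def LeadsTo (P Q : S → Prop) : Prop :=
  ∀ n, P (trace step s0 es n) → ∃ m, n ≤ m ∧ Q (trace step s0 es m)

variable {step s0 es}

theorem LeadsTo.of_imp {P Q : S → Prop} (h : ∀ s, P s → Q s) : LeadsTo step s0 es P Q :=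
  fun n hP => ⟨n, le_rfl, h _ hP⟩

theorem LeadsTo.trans {P Q R : S → Prop} (hPQ : LeadsTo step s0 es P Q)
    (hQR : LeadsTo step s0 es Q R) : LeadsTo step s0 es P R := fun n hP =>
  let ⟨m, hnm, hQ⟩ := hPQ n hP
  let ⟨k, hmk, hR⟩ := hQR m hQ
  ⟨k, hnm.trans hmk, hR⟩

theorem LeadsTo.or {P Q R : S → Prop} (hP : LeadsTo step s0 es P R)
    (hQ : LeadsTo step s0 es Q R) : LeadsTo step s0 es (fun s => P s ∨ Q s) R :=
  fun n h => h.elim (hP n) (hQ n)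

theorem leadsTo_of_fair {P Q : S → Prop} (hfair : Fair es) (e : Event)
    (hstable : ∀ ev s, P s → P (step ev s) ∨ Q (step ev s)) (hfire : ∀ s, P s → Q (step e s)) :
    LeadsTo step s0 es P Q := by
  intro n hPn
  by_contra! hnoQ
  have hP : ∀ m, n ≤ m → P (trace step s0 es m) := by
    intro m hnm
    induction m, hnm using Nat.le_induction with
    | base => exact hPn
    | succ m hnm ih =>
      rw [trace_succ]
      refine (hstable _ _ ih).resolve_right fun hQ => hnoQ (m + 1) (by omega) ?_
      rwa [trace_succ]
  obtain ⟨m, hnm, hem⟩ := hfair e n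
  refine hnoQ (m + 1) (by omega) ?_
  rw [trace_succ, hem]
  exact hfire _ (hP m hnm)

end LeadsTo

namespace Bakery

open ProcState

abbrev State := ProcState × ProcState × ℕ × ℕ

def TicketsDistinct (s : State) : Prop := s.1 ≠ T → s.2.1 ≠ T → s.2.2.1 ≠ s.2.2.2

def Enabled1 (s : State) : Prop := s.1 = W ∧ (s.2.1 = T ∨ s.2.2.1 < s.2.2.2)

def Critical2 (s : State) : Prop := s.1 = W ∧ s.2.1 = U

def Behind2 (s : State) : Prop := s.1 = W ∧ s.2.1 = W ∧ s.2.2.2 < s.2.2.1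

theorem ticketsDistinct_step (e : Event) (s : State) (h : TicketsDistinct s) :
    TicketsDistinct (step3 e s) := by
  obtain ⟨s1, s2, t1, t2⟩ := s
  unfold TicketsDistinct at *
  cases e <;> simp only [step3] <;> split_ifs <;> simp_all

theorem waiting_cases {s : State} (hdist : TicketsDistinct s) (hW : s.1 = W) :
    Enabled1 s ∨ Critical2 s ∨ Behind2 s := by
  obtain ⟨s1, s2, t1, t2⟩ := s
  unfold TicketsDistinct at hdist
  simp only [Enabled1, Critical2, Behind2] at *
  cases s2 <;> simp_all

theorem enabled1_step (e : Event) (s : State) (h : Enabled1 s) :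
    Enabled1 (step3 e s) ∨ (step3 e s).1 = U := by
  obtain ⟨s1, s2, t1, t2⟩ := s
  unfold Enabled1 at *
  cases e <;> simp only [step3] <;> split_ifs <;> simp_all

theorem enabled1_take1 (s : State) (h : Enabled1 s) : (step3 .take1 s).1 = U := by
  obtain ⟨s1, s2, t1, t2⟩ := s
  unfold Enabled1 at h
  simp only [step3, if_pos h]

theorem critical2_step (e : Event) (s : State) (h : Critical2 s) :
    Critical2 (step3 e s) ∨ Enabled1 (step3 e s) ∨ (step3 e s).1 = U := by
  obtain ⟨s1, s2, t1, t2⟩ := s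
  unfold Critical2 Enabled1 at *
  cases e <;> simp only [step3] <;> split_ifs <;> simp_all

theorem critical2_release2 (s : State) (h : Critical2 s) : Enabled1 (step3 .release2 s) := by
  obtain ⟨s1, s2, t1, t2⟩ := s
  obtain ⟨rfl, rfl⟩ := h
  simp [step3, Enabled1]

theorem behind2_step (e : Event) (s : State) (h : Behind2 s) :
    Behind2 (step3 e s) ∨ Critical2 (step3 e s) := by
  obtain ⟨s1, s2, t1, t2⟩ := s
  unfold Behind2 Critical2 at *
  cases e <;> simp only [step3] <;> split_ifs <;> simp_all
  omega

theorem behind2_take2 (s : State) (h : Behind2 s) : Critical2 (step3 .take2 s) := by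
  obtain ⟨s1, s2, t1, t2⟩ := s
  obtain ⟨rfl, rfl, hlt⟩ := h
  simp [step3, Critical2, hlt]

end Bakery

open Bakery in
/-- Lamport's bakery algorithm (Example 3) satisfies non-starvation for process 1
under fairness. -/
theorem bakery_non_starvation_process1 :
    ∀ es : ℕ → Event, Fair es → ∀ i : ℕ,
      (trace step3 (ProcState.T, ProcState.T, 0, 0) es i).1 = ProcState.W →
      ∃ j, i ≤ j ∧
        (trace step3 (ProcState.T, ProcState.T, 0, 0) es j).1 = ProcState.U := by
  intro es hfair i hW
  let s0 : State := (ProcState.T, ProcState.T, 0, 0)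
  have hdist : TicketsDistinct (trace step3 s0 es i) :=
    trace_invariant step3 s0 es (fun hT => (hT rfl).elim) ticketsDistinct_step i
  have henabled : LeadsTo step3 s0 es Enabled1 (·.1 = ProcState.U) :=
    leadsTo_of_fair hfair .take1 enabled1_step enabled1_take1
  have hcritical : LeadsTo step3 s0 es Critical2 (·.1 = ProcState.U) :=
    (leadsTo_of_fair (Q := fun s => Enabled1 s ∨ s.1 = ProcState.U) hfair .release2
      critical2_step fun s h => .inl (critical2_release2 s h)).trans
      (henabled.or (.of_imp fun _ h => h))
  have hbehind : LeadsTo step3 s0 es Behind2 (·.1 = ProcState.U) :=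
    (leadsTo_of_fair hfair .take2 behind2_step behind2_take2).trans hcritical
  rcases waiting_cases hdist hW with h | h | h
  exacts [henabled i h, hcritical i h, hbehind i h]
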